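/- The standard curvature term acts on the alternating bivector representation as q(R)⋆ = (1/2)·Der_Ric − ℛ^alt: for every algebraic curvature tensor R on T, every orthonormal basis E₁, …, E_m of T, and all X, Y, U, V ∈ T, writing A_{μν} := E_μ∧E_ν, R_{μν} := R_{E_μ,E_ν}, and D(X,Y,U,V) := g(X,U)g(Y,V) − g(X,V)g(Y,U), one has (1/4)·Σ_{μ,ν=1}^m [ D(A_{μν}(R_{μν}X), Y, U, V) + D(R_{μν}X, A_{μν}Y, U, V) + D(A_{μν}X, R_{μν}Y, U, V) + D(X, A_{μν}(R_{μν}Y), U, V) ] = (1/2)·[ Ric(X,U)g(Y,V) − Ric(X,V)g(Y,U) + g(X,U)Ric(Y,V) − g(X,V)Ric(Y,U) ] + R(X,Y;U,V). -/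

import Mathlib

open scoped BigOperators

variable {T : Type*} [NormedAddCommGroup T] [InnerProductSpace ℝ T] [FiniteDimensional ℝ T]

/-- A map `T → T → T → T → ℝ` that is linear in each of its four arguments. -/
def IsQuadrilinear (R : T → T → T → T → ℝ) : Prop :=
  (∀ Y U V, IsLinearMap ℝ fun X => R X Y U V) ∧
  (∀ X U V, IsLinearMap ℝ fun Y => R X Y U V) ∧
  (∀ X Y V, IsLinearMap ℝ fun U => R X Y U V) ∧
  (∀ X Y U, IsLinearMap ℝ fun V => R X Y U V)

/-- An algebraic curvature tensor on `T`. -/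
def IsAlgCurv (R : T → T → T → T → ℝ) : Prop :=
  IsQuadrilinear R ∧
  (∀ X Y U V : T, R X Y U V = -R Y X U V) ∧
  (∀ X Y U V : T, R X Y U V = -R X Y V U) ∧
  (∀ X Y Z V : T, R X Y Z V + R Y Z X V + R Z X Y V = 0)

/-- The skew-symmetric endomorphism `(X∧Y)U := g(X,U)·Y − g(Y,U)·X`. -/
noncomputable def wedge (X Y : T) : T → T :=
  fun U => (inner ℝ X U : ℝ) • Y - (inner ℝ Y U : ℝ) • X

/-- The Ricci tensor of `R` with respect to the orthonormal basis `E`: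
`Ric(X,Y) := Σ_μ R(E_μ,X;Y,E_μ)`. -/
noncomputable def Ricci {m : ℕ} (E : OrthonormalBasis (Fin m) ℝ T)
    (R : T → T → T → T → ℝ) (X Y : T) : ℝ :=
  ∑ μ : Fin m, R (E μ) X Y (E μ)

/-- `D(X,Y,U,V) := g(X,U)g(Y,V) − g(X,V)g(Y,U)`. -/
noncomputable def D4 (X Y U V : T) : ℝ :=
  (inner ℝ X U : ℝ) * (inner ℝ Y V : ℝ) - (inner ℝ X V : ℝ) * (inner ℝ Y U : ℝ)

set_option linter.unusedSectionVars false
set_option maxHeartbeats 1000000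

lemma osum {m : ℕ} (E : OrthonormalBasis (Fin m) ℝ T) {L : T → ℝ} (hL : IsLinearMap ℝ L) (W : T) :
    ∑ μ : Fin m, (inner ℝ (E μ) W : ℝ) * L (E μ) = L W := by
  have h : ∑ μ : Fin m, (inner ℝ (E μ) W : ℝ) * L (E μ)
      = ∑ μ : Fin m, (hL.mk' L) ((E.repr W) μ • E μ) := by
    refine Finset.sum_congr rfl fun μ _ => ?_
    simp [E.repr_apply_apply, hL.map_smul, smul_eq_mul]
  rw [h, ← map_sum, E.sum_repr]
  rfl

lemma osumR2 {m : ℕ} (E : OrthonormalBasis (Fin m) ℝ T) {R : T → T → T → T → ℝ}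
    (h2 : ∀ X U V, IsLinearMap ℝ fun Y => R X Y U V) (a c d W : T) :
    ∑ ν : Fin m, (inner ℝ (E ν) W : ℝ) * R a (E ν) c d = R a W c d :=
  osum E (h2 a c d) W

lemma osumR1 {m : ℕ} (E : OrthonormalBasis (Fin m) ℝ T) {R : T → T → T → T → ℝ}
    (h1 : ∀ Y U V, IsLinearMap ℝ fun X => R X Y U V) (b c d W : T) :
    ∑ μ : Fin m, (inner ℝ (E μ) W : ℝ) * R (E μ) b c d = R W b c d :=
  osum E (h1 b c d) W

lemma traceR {m : ℕ} (E : OrthonormalBasis (Fin m) ℝ T) {R : T → T → T → T → ℝ}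
    (hs1 : ∀ X Y U V : T, R X Y U V = -R Y X U V) (a c : T) :
    ∑ ν : Fin m, R a (E ν) c (E ν) = -Ricci E R a c := by
  rw [Ricci, ← Finset.sum_neg_distrib]
  exact Finset.sum_congr rfl fun ν _ => by rw [hs1]

lemma ricci_def {m : ℕ} (E : OrthonormalBasis (Fin m) ℝ T) (R : T → T → T → T → ℝ) (A B : T) :
    ∑ μ : Fin m, R (E μ) A B (E μ) = Ricci E R A B := rfl

lemma ricciLin {m : ℕ} (E : OrthonormalBasis (Fin m) ℝ T) {R : T → T → T → T → ℝ}
    (h2 : ∀ X U V, IsLinearMap ℝ fun Y => R X Y U V) (c W : T) :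
    ∑ μ : Fin m, (inner ℝ (E μ) W : ℝ) * Ricci E R (E μ) c = Ricci E R W c := by
  have hL : IsLinearMap ℝ (fun z : T => Ricci E R z c) := by
    constructor
    · intro x y; simp [Ricci, (h2 _ _ _).map_add, Finset.sum_add_distrib]
    · intro r x
      simp only [Ricci, (h2 _ _ _).map_smul, smul_eq_mul, Finset.mul_sum]
  exact osum E hL W

lemma pair_symm {R : T → T → T → T → ℝ} (hR : IsAlgCurv R) (a b c d : T) :
    R a b c d = R c d a b := by
  obtain ⟨-, hs1, hs2, hB⟩ := hR
  have b1 := hB b c a d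
  have b2 := hB c a d b
  have b3 := hB a d b c
  have b4 := hB d b c a
  linarith [hs2 b c a d, hs2 c a b d, hs2 a d b c, hs2 d b a c,
    hs1 d c a b, hs1 b a d c, hs2 a b d c, hs2 c d b a]

/-- the standard curvature term acts on the alternating bivector
representation as `(1/2)·Der_Ric − ℛ^alt`. -/
theorem q_acts_on_alt_bivectors {m : ℕ} (E : OrthonormalBasis (Fin m) ℝ T)
    (R : T → T → T → T → ℝ) (hR : IsAlgCurv R)
    (Rop : T → T → T → T)
    (hRop : ∀ X Y U V : T, (inner ℝ (Rop X Y U) V : ℝ) = R X Y U V) :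
    ∀ X Y U V : T,
      (1 / 4 : ℝ) * ∑ μ : Fin m, ∑ ν : Fin m,
          (D4 (wedge (E μ) (E ν) (Rop (E μ) (E ν) X)) Y U V
            + D4 (Rop (E μ) (E ν) X) (wedge (E μ) (E ν) Y) U V
            + D4 (wedge (E μ) (E ν) X) (Rop (E μ) (E ν) Y) U V
            + D4 X (wedge (E μ) (E ν) (Rop (E μ) (E ν) Y)) U V)
        = (1 / 2 : ℝ) * (Ricci E R X U * (inner ℝ Y V : ℝ) - Ricci E R X V * (inner ℝ Y U : ℝ)
            + (inner ℝ X U : ℝ) * Ricci E R Y V - (inner ℝ X V : ℝ) * Ricci E R Y U)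
          + R X Y U V := by
  intro X Y U V
  obtain ⟨⟨hl1, hl2, hl3, hl4⟩, hs1, hs2, hB⟩ := hR
  have hRop' : ∀ a b c d : T, (inner ℝ d (Rop a b c) : ℝ) = R a b c d := fun a b c d => by
    rw [real_inner_comm]; exact hRop a b c d
  have hexp : ∀ μ ν : Fin m,
      (D4 (wedge (E μ) (E ν) (Rop (E μ) (E ν) X)) Y U V
        + D4 (Rop (E μ) (E ν) X) (wedge (E μ) (E ν) Y) U V
        + D4 (wedge (E μ) (E ν) X) (Rop (E μ) (E ν) Y) U V
        + D4 X (wedge (E μ) (E ν) (Rop (E μ) (E ν) Y)) U V)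
      = (inner ℝ Y V : ℝ) * ((inner ℝ (E ν) U : ℝ) * R (E μ) (E ν) X (E μ))
      - (inner ℝ Y V : ℝ) * ((inner ℝ (E μ) U : ℝ) * R (E μ) (E ν) X (E ν))
      - (inner ℝ Y U : ℝ) * ((inner ℝ (E ν) V : ℝ) * R (E μ) (E ν) X (E μ))
      + (inner ℝ Y U : ℝ) * ((inner ℝ (E μ) V : ℝ) * R (E μ) (E ν) X (E ν))
      + (inner ℝ (E μ) Y : ℝ) * ((inner ℝ (E ν) V : ℝ) * R (E μ) (E ν) X U)
      - (inner ℝ (E μ) V : ℝ) * ((inner ℝ (E ν) Y : ℝ) * R (E μ) (E ν) X U)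
      - (inner ℝ (E μ) Y : ℝ) * ((inner ℝ (E ν) U : ℝ) * R (E μ) (E ν) X V)
      + (inner ℝ (E μ) U : ℝ) * ((inner ℝ (E ν) Y : ℝ) * R (E μ) (E ν) X V)
      + (inner ℝ (E μ) X : ℝ) * ((inner ℝ (E ν) U : ℝ) * R (E μ) (E ν) Y V)
      - (inner ℝ (E μ) U : ℝ) * ((inner ℝ (E ν) X : ℝ) * R (E μ) (E ν) Y V)
      - (inner ℝ (E μ) X : ℝ) * ((inner ℝ (E ν) V : ℝ) * R (E μ) (E ν) Y U)
      + (inner ℝ (E μ) V : ℝ) * ((inner ℝ (E ν) X : ℝ) * R (E μ) (E ν) Y U)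
      + (inner ℝ X U : ℝ) * ((inner ℝ (E ν) V : ℝ) * R (E μ) (E ν) Y (E μ))
      - (inner ℝ X U : ℝ) * ((inner ℝ (E μ) V : ℝ) * R (E μ) (E ν) Y (E ν))
      - (inner ℝ X V : ℝ) * ((inner ℝ (E ν) U : ℝ) * R (E μ) (E ν) Y (E μ))
      + (inner ℝ X V : ℝ) * ((inner ℝ (E μ) U : ℝ) * R (E μ) (E ν) Y (E ν)) := by
    intro μ ν
    simp only [D4, wedge, inner_sub_left, real_inner_smul_left, hRop, hRop']
    ring
  rw [Finset.sum_congr rfl fun μ _ => Finset.sum_congr rfl fun ν _ => hexp μ ν]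
  simp only [Finset.sum_add_distrib, Finset.sum_sub_distrib, ← Finset.mul_sum,
    osumR2 E hl2, traceR E hs1, mul_neg, Finset.sum_neg_distrib,
    osumR1 E hl1, ricci_def, ricciLin E hl2]
  have hps := pair_symm (⟨⟨hl1, hl2, hl3, hl4⟩, hs1, hs2, hB⟩ : IsAlgCurv R)
  have hRicSym : ∀ a b : T, Ricci E R a b = Ricci E R b a := by
    intro a b
    refine Finset.sum_congr rfl fun μ _ => ?_
    rw [hps (E μ) a b (E μ), hs1 b (E μ) (E μ) a, hs2 (E μ) b (E μ) a, neg_neg]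
  have hQ : R Y V X U - R V Y X U - R Y U X V + R U Y X V + R X U Y V - R U X Y V
      - R X V Y U + R V X Y U = 4 * R X Y U V := by
    linarith [hB X Y U V, hB X Y V U, hs1 U X Y V, hs1 V X Y U, hs2 X Y U V,
      hps Y U X V, hps Y V X U, hs1 V Y X U, hs1 U Y X V]
  linear_combination ((inner ℝ Y V : ℝ) / 2) * hRicSym U X
    - ((inner ℝ Y U : ℝ) / 2) * hRicSym V X
    + ((inner ℝ X U : ℝ) / 2) * hRicSym V Y
    - ((inner ℝ X V : ℝ) / 2) * hRicSym U Y
    + (1 / 4 : ℝ) * hQ
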